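/- Let Φ be the root system of a simple Lie algebra not of type A or C, with highest root θ a fundamental weight dual to the simple root α_k. Let β be a negative root with c_k(β) = 0 such that −β is not simple. Then there exists a positive root γ with c_k(γ) = 0 such that β + γ is a negative root and ⟨β+γ, α_k⟩ ≤ 0. -/

import Mathlib

open RealInnerProductSpace

section AuxStmt12
variable {V : Type*} [NormedAddCommGroup V] [InnerProductSpace ℝ V]

lemma stmt12_inner_self_pos {x : V} (hx : x ≠ 0) : 0 < ⟪x, x⟫ :=
  real_inner_self_nonneg.lt_of_ne (fun h => hx (inner_self_eq_zero.mp h.symm))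

lemma stmt12_aux_sub_root (Φ : Set V) (h0 : (0 : V) ∉ Φ)
    (hneg : ∀ β ∈ Φ, -β ∈ Φ)
    (hcrys : ∀ β ∈ Φ, ∀ γ ∈ Φ, ∃ n : ℤ, 2 * ⟪β, γ⟫ = (n : ℝ) * ⟪γ, γ⟫)
    (hrefl : ∀ β ∈ Φ, ∀ γ ∈ Φ, β - (2 * ⟪β, γ⟫ / ⟪γ, γ⟫) • γ ∈ Φ)
    {σ τ : V} (hσ : σ ∈ Φ) (hτ : τ ∈ Φ) (hpos : 0 < ⟪σ, τ⟫) (hne : σ ≠ τ) :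
    σ - τ ∈ Φ := by
  have hσ0 : σ ≠ 0 := fun h => h0 (h ▸ hσ)
  have hτ0 : τ ≠ 0 := fun h => h0 (h ▸ hτ)
  have hσσ : 0 < ⟪σ, σ⟫ := stmt12_inner_self_pos hσ0
  have hττ : 0 < ⟪τ, τ⟫ := stmt12_inner_self_pos hτ0
  obtain ⟨m, hm⟩ := hcrys σ hσ τ hτ
  obtain ⟨n, hn⟩ := hcrys τ hτ σ hσ
  have hcomm : ⟪σ, τ⟫ = ⟪τ, σ⟫ := real_inner_comm τ σ
  have hmR : 0 < (m : ℝ) := by nlinarith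
  have hnR : 0 < (n : ℝ) := by nlinarith
  have hm1 : 1 ≤ m := by exact_mod_cast hmR
  have hn1 : 1 ≤ n := by exact_mod_cast hnR
  by_cases hmeq : m = 1
  · have key := hrefl σ hσ τ hτ
    have hsc : 2 * ⟪σ, τ⟫ / ⟪τ, τ⟫ = 1 := by
      rw [hm, hmeq]; push_cast; field_simp
    rw [hsc, one_smul] at key
    exact key
  · by_cases hneq : n = 1
    · have key := hrefl τ hτ σ hσ
      have hsc : 2 * ⟪τ, σ⟫ / ⟪σ, σ⟫ = 1 := by
        rw [hn, hneq]; push_cast; field_simp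
      rw [hsc, one_smul] at key
      have := hneg _ key
      rwa [neg_sub] at this
    · have hm2 : 2 ≤ m := by omega
      have hn2 : 2 ≤ n := by omega
      have hm2R : (2 : ℝ) ≤ (m : ℝ) := by exact_mod_cast hm2
      have hn2R : (2 : ℝ) ≤ (n : ℝ) := by exact_mod_cast hn2
      have hCS := real_inner_mul_inner_self_le σ τ
      have hmn4 : (m : ℝ) * (n : ℝ) ≤ 4 := by
        have h4 : (m : ℝ) * (n : ℝ) * (⟪σ, σ⟫ * ⟪τ, τ⟫) ≤ 4 * (⟪σ, σ⟫ * ⟪τ, τ⟫) := by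
          nlinarith
        have hprod : 0 < ⟪σ, σ⟫ * ⟪τ, τ⟫ := mul_pos hσσ hττ
        exact le_of_mul_le_mul_right (by linarith) hprod
      have hmn4' : m * n ≤ 4 := by exact_mod_cast hmn4
      have hm2' : m = 2 := by nlinarith
      have hn2' : n = 2 := by nlinarith
      exfalso
      have h1 : ⟪σ, τ⟫ = ⟪τ, τ⟫ := by rw [hm2'] at hm; push_cast at hm; linarith
      have h2 : ⟪σ, τ⟫ = ⟪σ, σ⟫ := by rw [hn2'] at hn; push_cast at hn; linarith [hcomm]
      have h3 : ⟪σ - τ, σ - τ⟫ = 0 := by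
        rw [real_inner_sub_sub_self]; linarith
      exact hne (sub_eq_zero.mp (inner_self_eq_zero.mp h3))

end AuxStmt12

/-- Lemma on root systems (not of type A or C): if `θ` is the highest root, a
fundamental weight dual to the (long) simple root `α_k`, and `β` is a negative
root with `c_k(β) = 0` whose negative is not simple, then there is a positive
root `γ` with `c_k(γ) = 0` such that `β + γ` is a negative root and
`⟨β+γ, α_k⟩ ≤ 0`.  Simple-root coordinates are taken with respect to a basis `b`
with `b j = α j`. -/
theorem stmt12 {V : Type*} [NormedAddCommGroup V] [InnerProductSpace ℝ V]
    (Φ : Set V) (hfin : Φ.Finite) (h0 : (0 : V) ∉ Φ)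
    (hneg : ∀ β ∈ Φ, -β ∈ Φ)
    (hcrys : ∀ β ∈ Φ, ∀ γ ∈ Φ, ∃ n : ℤ, 2 * ⟪β, γ⟫ = (n : ℝ) * ⟪γ, γ⟫)
    (hrefl : ∀ β ∈ Φ, ∀ γ ∈ Φ, β - (2 * ⟪β, γ⟫ / ⟪γ, γ⟫) • γ ∈ Φ)
    (hred : ∀ β ∈ Φ, (2 : ℝ) • β ∉ Φ)
    {ℓ : ℕ} (b : Module.Basis (Fin ℓ) ℝ V) (α : Fin ℓ → V)
    (hb : ∀ j, b j = α j) (hα : ∀ j, α j ∈ Φ)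
    (hbase : ∀ β ∈ Φ, (∀ j, 0 ≤ b.repr β j) ∨ (∀ j, b.repr β j ≤ 0))
    (k : Fin ℓ)
    (hlong : ∀ β ∈ Φ, ⟪β, β⟫ ≤ ⟪α k, α k⟫)
    (θ : V) (hθ : θ ∈ Φ) (hθθ : ⟪θ, θ⟫ ≠ 0)
    (hfund : ∀ j, 2 * ⟪α j, θ⟫ / ⟪θ, θ⟫ = if j = k then 1 else 0)
    (β : V) (hβΦ : β ∈ Φ)
    (hβneg : ∀ j, b.repr β j ≤ 0)
    (hβk : b.repr β k = 0)
    (hβnotsimple : ∀ j, β ≠ -α j) :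
    ∃ γ ∈ Φ, (∀ j, 0 ≤ b.repr γ j) ∧ b.repr γ k = 0 ∧
      (β + γ ∈ Φ) ∧ (∀ j, b.repr (β + γ) j ≤ 0) ∧
      2 * ⟪β + γ, α k⟫ / ⟪α k, α k⟫ ≤ 0 := by
  classical
  set π : V := -β with hπdef
  have hπΦ : π ∈ Φ := hneg β hβΦ
  have hreprπ : ∀ j, b.repr π j = - b.repr β j := by
    intro j; rw [hπdef, map_neg]; rfl
  have hπpos : ∀ j, 0 ≤ b.repr π j := fun j => by
    rw [hreprπ]; linarith [hβneg j]
  have hπk : b.repr π k = 0 := by rw [hreprπ, hβk, neg_zero]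
  have hπnotsimple : ∀ j, π ≠ α j := by
    intro j h
    exact hβnotsimple j (by rw [← h, hπdef, neg_neg])
  have hπ0 : π ≠ 0 := fun h => h0 (h ▸ hπΦ)
  have hππ : 0 < ⟪π, π⟫ := stmt12_inner_self_pos hπ0
  have hA : 0 < ⟪α k, α k⟫ := stmt12_inner_self_pos (fun h => h0 (h ▸ hα k))
  -- find a simple root with positive inner product and positive coefficient
  have hsum : ⟪π, π⟫ = ∑ i, (b.repr π i) * ⟪α i, π⟫ := by
    have h1 : ⟪(∑ i, b.repr π i • b i : V), π⟫ = ∑ i, (b.repr π i) * ⟪α i, π⟫ := by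
      rw [sum_inner]
      exact Finset.sum_congr rfl fun i _ => by rw [real_inner_smul_left, hb]
    rw [← h1, b.sum_repr]
  have hexj : ∃ j, 0 < (b.repr π j) * ⟪α j, π⟫ := by
    by_contra hc
    push_neg at hc
    have : ⟪π, π⟫ ≤ 0 := by
      rw [hsum]; exact Finset.sum_nonpos fun i _ => hc i
    linarith
  obtain ⟨j, hj⟩ := hexj
  have hjpos : 0 < b.repr π j := by
    rcases (hπpos j).lt_or_eq with h | h
    · exact h
    · exfalso; rw [← h] at hj; simp at hj
  have hinj : 0 < ⟪α j, π⟫ := by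
    rcases mul_pos_iff.mp hj with ⟨h1, h2⟩ | ⟨h1, h2⟩
    · exact h2
    · linarith [hπpos j]
  have hjk : j ≠ k := by
    intro h; rw [h, hπk] at hjpos; exact lt_irrefl _ hjpos
  -- δ = π - α j is a root
  have hδΦ : π - α j ∈ Φ :=
    stmt12_aux_sub_root Φ h0 hneg hcrys hrefl hπΦ (hα j)
      (by rwa [real_inner_comm]) (hπnotsimple j)
  set δ : V := π - α j with hδdef
  have hreprδ : ∀ i, b.repr δ i = b.repr π i - (if j = i then 1 else 0) := by
    intro i
    rw [hδdef, map_sub, ← hb j, b.repr_self]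
    simp [Finsupp.sub_apply, Finsupp.single_apply]
  have hreprδj : b.repr δ j = b.repr π j - 1 := by rw [hreprδ]; simp
  have hreprδk : b.repr δ k = 0 := by
    rw [hreprδ, hπk, if_neg hjk]; ring
  -- δ is a positive root
  have hδpos : ∀ i, 0 ≤ b.repr δ i := by
    rcases hbase δ hδΦ with h | h
    · exact h
    · exfalso
      -- all coords of δ nonpositive: then π = c • α j with 0 < c ≤ 1
      have hzero : ∀ i, i ≠ j → b.repr π i = 0 := by
        intro i hi
        have h1 := h i
        rw [hreprδ, if_neg (fun hh => hi hh.symm)] at h1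
        have h2 := hπpos i
        linarith
      have hcle : b.repr π j ≤ 1 := by
        have h1 := h j
        rw [hreprδj] at h1
        linarith
      set c : ℝ := b.repr π j with hcdef
      have hπeq : π = c • α j := by
        conv_lhs => rw [← b.sum_repr π]
        rw [Finset.sum_eq_single j]
        · rw [hb]
        · intro i _ hi; rw [hzero i hi, zero_smul]
        · intro hi; exact absurd (Finset.mem_univ j) hi
      obtain ⟨m, hm⟩ := hcrys π hπΦ (α j) (hα j)
      have hAj : 0 < ⟪α j, α j⟫ := stmt12_inner_self_pos (fun hh => h0 (hh ▸ hα j))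
      have hmc : (m : ℝ) = 2 * c := by
        rw [hπeq, real_inner_smul_left] at hm
        have h1 : (m : ℝ) * ⟪α j, α j⟫ = (2 * c) * ⟪α j, α j⟫ := by linarith
        exact mul_right_cancel₀ (ne_of_gt hAj) h1
      have hm12 : m = 1 ∨ m = 2 := by
        have h1 : (0 : ℝ) < m := by rw [hmc]; linarith
        have h2 : (m : ℝ) ≤ 2 := by rw [hmc]; linarith
        have h1' : 0 < m := by exact_mod_cast h1
        have h2' : m ≤ 2 := by exact_mod_cast h2
        omega
      rcases hm12 with hm' | hm'
      · -- c = 1/2, so α j = 2 • π ∈ Φ, contradicting reducedness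
        have hc12 : c = 1 / 2 := by rw [hm'] at hmc; push_cast at hmc; linarith
        have : (2 : ℝ) • π = α j := by
          rw [hπeq, hc12, smul_smul]; norm_num
        exact hred π hπΦ (this ▸ hα j)
      · -- c = 1, so π = α j, contradicting non-simplicity
        have hc1 : c = 1 := by rw [hm'] at hmc; push_cast at hmc; linarith
        exact hπnotsimple j (by rw [hπeq, hc1, one_smul])
  -- integrality data against α k
  obtain ⟨np, hnp⟩ := hcrys π hπΦ (α k) (hα k)
  obtain ⟨nd, hnd⟩ := hcrys δ hδΦ (α k) (hα k)
  -- np ≥ -1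
  have hnp1 : (-1 : ℤ) ≤ np := by
    by_contra hcon
    push_neg at hcon
    have h2 : (np : ℝ) ≤ -2 := by exact_mod_cast (by omega : np ≤ -2)
    have ht : ⟪π, α k⟫ ≤ -⟪α k, α k⟫ := by nlinarith
    have hP : ⟪π, π⟫ ≤ ⟪α k, α k⟫ := hlong π hπΦ
    have h3 : ⟪π + α k, π + α k⟫ ≤ 0 := by
      rw [real_inner_add_add_self]; linarith
    have h4 : π + α k = 0 := by
      have := real_inner_self_nonneg (x := π + α k)
      exact inner_self_eq_zero.mp (le_antisymm h3 this)
    have h5 : π = -α k := eq_neg_of_add_eq_zero_left h4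
    have h6 : b.repr π k = -1 := by
      rw [h5, map_neg, ← hb k, b.repr_self]
      simp
    rw [hπk] at h6
    norm_num at h6
  by_cases hcase : 0 ≤ ⟪δ, α k⟫
  · -- γ = α j
    refine ⟨α j, hα j, ?_, ?_, ?_, ?_, ?_⟩
    · intro i
      rw [← hb j, b.repr_self, Finsupp.single_apply]
      split <;> norm_num
    · rw [← hb j, b.repr_self, Finsupp.single_apply, if_neg hjk]
    · have : β + α j = -δ := by rw [hδdef, hπdef]; abel
      rw [this]; exact hneg δ hδΦ
    · intro i
      have : β + α j = -δ := by rw [hδdef, hπdef]; abel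
      rw [this, map_neg]
      simpa using neg_nonpos_of_nonneg (hδpos i)
    · have : β + α j = -δ := by rw [hδdef, hπdef]; abel
      rw [this]
      apply div_nonpos_of_nonpos_of_nonneg _ (le_of_lt hA)
      rw [inner_neg_left]; linarith
  · -- γ = δ
    push_neg at hcase
    have hnd1 : nd ≤ -1 := by
      have : (nd : ℝ) * ⟪α k, α k⟫ < 0 := by rw [← hnd]; linarith
      have h1 : (nd : ℝ) < 0 := by nlinarith
      have : nd < 0 := by exact_mod_cast h1
      omega
    have hjknn : 0 ≤ ⟪α j, α k⟫ := by
      have hsplit : ⟪π, α k⟫ = ⟪δ, α k⟫ + ⟪α j, α k⟫ := by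
        rw [hδdef, inner_sub_left]; ring
      have hnpR : (-1 : ℝ) ≤ (np : ℝ) := by exact_mod_cast hnp1
      have hndR : (nd : ℝ) ≤ -1 := by exact_mod_cast hnd1
      nlinarith
    refine ⟨δ, hδΦ, hδpos, hreprδk, ?_, ?_, ?_⟩
    · have : β + δ = -α j := by rw [hδdef, hπdef]; abel
      rw [this]; exact hneg (α j) (hα j)
    · intro i
      have : β + δ = -α j := by rw [hδdef, hπdef]; abel
      rw [this, map_neg, ← hb j, b.repr_self]
      simp only [Finsupp.coe_neg, Pi.neg_apply, Finsupp.single_apply]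
      split <;> norm_num
    · have : β + δ = -α j := by rw [hδdef, hπdef]; abel
      rw [this]
      apply div_nonpos_of_nonpos_of_nonneg _ (le_of_lt hA)
      rw [inner_neg_left]; linarith
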